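/- Let X be a continuum without cut points and let E be a nonsingleton subcontinuum of X. Then there exists Q which is a necklace, a maximal inseparable set, or an inseparable cut pair of X, with Q ∩ E ≠ ∅. -/
import Mathlib


open Set

section Defs

variable {X : Type*} [TopologicalSpace X]

/-- `U` is relatively open in the subspace `X - C`. -/
def RelOpen (C U : Set X) : Prop := ∃ O : Set X, IsOpen O ∧ U = O ∩ Cᶜ

/-- `U, V` form a disconnection of `X - C` into two nonempty relatively open sets. -/
def SepPair (C U V : Set X) : Prop :=
  RelOpen C U ∧ RelOpen C V ∧ Disjoint U V ∧ U ∪ V = Cᶜ ∧ U.Nonempty ∧ V.Nonempty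

/-- `C` separates `A` from `B`. -/
def Separates (C A B : Set X) : Prop := ∃ U V : Set X, SepPair C U V ∧ A ⊆ U ∧ B ⊆ V

/-- `C` separates `X`, i.e. `X - C` is disconnected. -/
def Cuts (C : Set X) : Prop := ∃ U V : Set X, SepPair C U V

def CutPoint (c : X) : Prop := Cuts ({c} : Set X)

def CutPair (c d : X) : Prop := c ≠ d ∧ ¬CutPoint c ∧ ¬CutPoint d ∧ Cuts ({c, d} : Set X)

def IsSubcontinuum (Y : Set X) : Prop := IsCompact Y ∧ IsConnected Y

/-- A nondegenerate set no two of whose points are separated by a cut pair. -/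
def InsepSet (A : Set X) : Prop :=
  A.Nontrivial ∧ ∀ c d : X, CutPair c d → ∀ a ∈ A, ∀ b ∈ A,
    ¬Separates ({c, d} : Set X) {a} {b}

def MaxInsep (A : Set X) : Prop := InsepSet A ∧ ∀ B : Set X, InsepSet B → A ⊆ B → B = A

def InsepCutPair (a b : X) : Prop := CutPair a b ∧ InsepSet ({a, b} : Set X)

/-- A cyclic decomposition of `X` by the points `x 0, …, x (n-1)` (cyclically indexed),
into subcontinua `M i`, consecutive ones meeting in a single point. -/
def CyclicDecomp (n : ℕ) (x : ZMod n → X) (M : ZMod n → Set X) : Prop :=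
  2 < n ∧ Function.Injective x ∧
  (∀ i, IsSubcontinuum (M i)) ∧
  (∀ i, M i ∩ M (i + 1) = {x (i + 1)}) ∧
  (∀ i j, i ≠ j → j ≠ i + 1 → i ≠ j + 1 → M i ∩ M j = ∅) ∧
  (⋃ i, M i) = univ

/-- A finite set is cyclic if it is a cut pair, or admits a cyclic decomposition. -/
def CyclicFinset (S : Set X) : Prop :=
  (∃ a b : X, CutPair a b ∧ S = {a, b}) ∨
  (∃ n : ℕ, ∃ (x : ZMod n → X) (M : ZMod n → Set X), CyclicDecomp n x M ∧ S = Set.range x)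

/-- A set (with more than one point) is cyclic if every finite subset with more
than one element is cyclic. -/
def CyclicSet (S : Set X) : Prop :=
  ∀ A : Finset X, ↑A ⊆ S → 1 < A.card → CyclicFinset (↑A : Set X)

/-- A necklace: a maximal cyclic subset with more than two elements. -/
def Necklace (S : Set X) : Prop :=
  CyclicSet S ∧ (∃ a ∈ S, ∃ b ∈ S, ∃ c ∈ S, a ≠ b ∧ a ≠ c ∧ b ≠ c) ∧
  ∀ S' : Set X, CyclicSet S' → S ⊆ S' → S' = S

/-- Membership in the collection `R`: necklaces, maximal inseparable sets,
and inseparable cut pairs. -/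
def InR (S : Set X) : Prop :=
  Necklace S ∨ MaxInsep S ∨ ∃ a b : X, InsepCutPair a b ∧ S = {a, b}

/-- `A` has exactly two connected components. -/
def TwoComponents (A : Set X) : Prop :=
  ∃ u ∈ A, ∃ v ∈ A, connectedComponentIn A u ≠ connectedComponentIn A v ∧
    ∀ w ∈ A, connectedComponentIn A w = connectedComponentIn A u ∨
      connectedComponentIn A w = connectedComponentIn A v

/-- `S`-equivalence of points of `X - S`: they lie in the same piece of every
cyclic decomposition of `X` by a finite subset of `S`. -/
def SEquiv (S : Set X) (y z : X) : Prop :=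
  y ∉ S ∧ z ∉ S ∧
  ∀ (n : ℕ) (x : ZMod n → X) (M : ZMod n → Set X),
    CyclicDecomp n x M → Set.range x ⊆ S → ∃ i, y ∈ M i ∧ z ∈ M i

end Defs
section Aux

variable {X : Type*} [MetricSpace X]

lemma relOpen_isOpen {C U : Set X} (hC : IsClosed C) (h : RelOpen C U) : IsOpen U := by
  obtain ⟨O, hO, rfl⟩ := h
  exact hO.inter hC.isOpen_compl

lemma sepPair_symm {C U V : Set X} (h : SepPair C U V) : SepPair C V U :=
  ⟨h.2.1, h.1, h.2.2.1.symm, by rw [Set.union_comm]; exact h.2.2.2.1,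
    h.2.2.2.2.2, h.2.2.2.2.1⟩

lemma pair_isClosed (c d : X) : IsClosed ({c, d} : Set X) :=
  ((Set.finite_singleton d).insert c).isClosed

lemma sepPair_subset_compl {C U V : Set X} (h : SepPair C U V) : U ⊆ Cᶜ := by
  intro z hz
  have : z ∈ U ∪ V := Or.inl hz
  rw [h.2.2.2.1] at this
  exact this

lemma closure_subset_of_sepPair {C U V : Set X} (hC : IsClosed C) (h : SepPair C U V) :
    closure U ⊆ U ∪ C := by
  have hV : IsOpen V := relOpen_isOpen hC h.2.1
  have h1 : closure U ⊆ Vᶜ :=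
    closure_minimal (fun z hz => Set.disjoint_left.mp h.2.2.1 hz) hV.isClosed_compl
  intro z hz
  by_cases hzC : z ∈ C
  · exact Or.inr hzC
  · have : z ∈ U ∪ V := h.2.2.2.1.symm ▸ hzC
    rcases this with hU | hV'
    · exact Or.inl hU
    · exact absurd hV' (h1 hz)

lemma not_separates_self {C : Set X} {p : X} (h : Separates C {p} {p}) : False := by
  obtain ⟨U, V, hsp, hU, hV⟩ := h
  exact Set.disjoint_left.mp hsp.2.2.1 (hU rfl) (hV rfl)

lemma cutPair_symm {c d : X} (h : CutPair c d) : CutPair d c :=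
  ⟨h.1.symm, h.2.2.1, h.2.1, by rw [Set.pair_comm]; exact h.2.2.2⟩

variable [CompactSpace X] [ConnectedSpace X]

/-- helper: both boundary points on one side of a disconnection gives a clopen piece. -/
lemma clopen_contra {G : Set X} {c e : X} (hG : IsOpen G)
    {P Q v : Set X} (hQcl : IsClosed Q) (hQ : Q = closure G ∩ v) (hv : IsOpen v)
    (hdisj : P ∩ Q = ∅)
    (hcl : closure G ⊆ G ∪ {c, e}) (hcP : c ∈ P) (heP : e ∈ P) (hQne : Q.Nonempty) :
    False := by
  have hQG : Q ⊆ G := by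
    intro z hz
    have hzK : z ∈ closure G := hQ ▸ hz |>.1
    rcases hcl hzK with hzG | hze
    · exact hzG
    · rcases hze with rfl | rfl
      · exact absurd (Set.mem_inter hcP hz) (by rw [hdisj]; exact fun h => h)
      · exact absurd (Set.mem_inter heP hz) (by rw [hdisj]; exact fun h => h)
  have hQeq : Q = v ∩ G := by
    apply Set.Subset.antisymm
    · exact fun z hz => ⟨(hQ ▸ hz).2, hQG hz⟩
    · intro z hz
      rw [hQ]
      exact ⟨subset_closure hz.2, hz.1⟩
  have hQopen : IsOpen Q := hQeq ▸ hv.inter hG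
  have hclopen : IsClopen Q := ⟨hQcl, hQopen⟩
  rcases isClopen_iff.mp hclopen with h1 | h1
  · exact hQne.ne_empty h1
  · have : c ∈ Q := h1 ▸ Set.mem_univ c
    exact absurd (Set.mem_inter hcP this) (by rw [hdisj]; exact fun h => h)

/-- helper: boundary points on opposite parts of a disconnection gives a cut point. -/
lemma cutpoint_of_split {G : Set X} {c e : X} (hG : IsOpen G) (hcG : c ∉ G)
    (hc : c ∈ closure G) (hcl : closure G ⊆ G ∪ {c, e})
    (hw : ∃ w, w ∉ closure G)
    {P Q u : Set X} (hu : IsOpen u) (hPcl : IsClosed P) (hQcl : IsClosed Q)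
    (hP : P = closure G ∩ u) (hPQ : P ∪ Q = closure G) (hdisj : P ∩ Q = ∅)
    (hcP : c ∈ P) (heQ : e ∈ Q) : CutPoint c := by
  have hPG : P \ {c} = u ∩ G := by
    apply Set.Subset.antisymm
    · rintro z ⟨hzP, hzc⟩
      refine ⟨(hP ▸ hzP).2, ?_⟩
      have hzK : z ∈ closure G := (hP ▸ hzP).1
      rcases hcl hzK with hzG | hze
      · exact hzG
      · exfalso
        rcases hze with rfl | rfl
        · exact hzc rfl
        · exact absurd (Set.mem_inter hzP heQ) (by rw [hdisj]; exact fun h => h)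
    · rintro z ⟨hzu, hzG⟩
      refine ⟨hP ▸ ⟨subset_closure hzG, hzu⟩, ?_⟩
      rintro rfl
      exact hcG hzG
  have hopen : IsOpen (P \ {c}) := hPG ▸ hu.inter hG
  have hPne : (P \ {c}).Nonempty := by
    rw [Set.diff_nonempty]
    intro hsub
    have hGQ : G ⊆ Q := by
      intro z hz
      have hzK : z ∈ closure G := subset_closure hz
      rcases (hPQ ▸ hzK : z ∈ P ∪ Q) with hzP | hzQ
      · exact absurd (hsub hzP ▸ hz) hcG
      · exact hzQ
    have : c ∈ Q := hQcl.closure_subset_iff.mpr hGQ hc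
    exact absurd (Set.mem_inter hcP this) (by rw [hdisj]; exact fun h => h)
  obtain ⟨w, hwK⟩ := hw
  refine ⟨P \ {c}, (P ∪ {c})ᶜ, ⟨P \ {c}, hopen, ?_⟩,
    ⟨Pᶜ, hPcl.isOpen_compl, (Set.compl_union P {c}).symm ▸ rfl⟩, ?_, ?_, hPne, ⟨w, ?_⟩⟩
  · ext z
    simp only [Set.mem_diff, Set.mem_inter_iff, Set.mem_compl_iff, Set.mem_singleton_iff]
    tauto
  · rw [Set.compl_union]
    exact Set.disjoint_left.mpr fun z hz h2 => h2.1 hz.1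
  · ext z
    simp only [Set.mem_union, Set.mem_diff, Set.mem_compl_iff, Set.mem_union,
      Set.mem_singleton_iff]
    tauto
  · simp only [Set.mem_compl_iff, Set.mem_union, Set.mem_singleton_iff]
    push_neg
    exact ⟨fun hP' => hwK (hPQ ▸ Or.inl hP'), fun h => hwK (h ▸ hc)⟩

/-- Key lemma: the closure of an open set with at most two boundary points is connected,
in a continuum without cut points. -/
lemma closure_connected_of_two_boundary {G : Set X} {c e : X}
    (hnc : ∀ p : X, ¬CutPoint p)
    (hG : IsOpen G) (hcG : c ∉ G) (heG : e ∉ G)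
    (hc : c ∈ closure G) (he : e ∈ closure G)
    (hcl : closure G ⊆ G ∪ {c, e})
    (hw : ∃ w, w ∉ closure G) :
    IsConnected (closure G) := by
  refine ⟨⟨c, hc⟩, ?_⟩
  by_contra hdis
  rw [IsPreconnected] at hdis
  push_neg at hdis
  obtain ⟨u, v, hu, hv, hKuv, hKu, hKv, hsep⟩ := hdis
  have hsep' : closure G ∩ (u ∩ v) = ∅ := hsep
  set K := closure G with hK
  set P := K ∩ u with hPdef
  set Q := K ∩ v with hQdef
  have hPQ : P ∪ Q = K := by
    apply Set.Subset.antisymm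
    · exact Set.union_subset (Set.inter_subset_left) (Set.inter_subset_left)
    · intro z hz
      rcases hKuv hz with h1 | h1
      · exact Or.inl ⟨hz, h1⟩
      · exact Or.inr ⟨hz, h1⟩
  have hdisj : P ∩ Q = ∅ := by
    rw [Set.eq_empty_iff_forall_notMem]
    rintro z ⟨⟨hzK, hzu⟩, _, hzv⟩
    exact (Set.eq_empty_iff_forall_notMem.mp hsep') z ⟨hzK, hzu, hzv⟩
  have hPeq : P = K ∩ vᶜ := by
    apply Set.Subset.antisymm
    · rintro z ⟨hzK, hzu⟩
      exact ⟨hzK, fun hzv => (Set.eq_empty_iff_forall_notMem.mp hsep') z ⟨hzK, hzu, hzv⟩⟩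
    · rintro z ⟨hzK, hzv⟩
      rcases hKuv hzK with h1 | h1
      · exact ⟨hzK, h1⟩
      · exact absurd h1 hzv
  have hQeq : Q = K ∩ uᶜ := by
    apply Set.Subset.antisymm
    · rintro z ⟨hzK, hzv⟩
      exact ⟨hzK, fun hzu => (Set.eq_empty_iff_forall_notMem.mp hsep') z ⟨hzK, hzu, hzv⟩⟩
    · rintro z ⟨hzK, hzu⟩
      rcases hKuv hzK with h1 | h1
      · exact absurd h1 hzu
      · exact ⟨hzK, h1⟩
  have hPcl : IsClosed P := hPeq ▸ isClosed_closure.inter hv.isClosed_compl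
  have hQcl : IsClosed Q := hQeq ▸ isClosed_closure.inter hu.isClosed_compl
  have hcPQ : c ∈ P ∪ Q := hPQ ▸ hc
  have hePQ : e ∈ P ∪ Q := hPQ ▸ he
  rcases hcPQ with hcP | hcQ <;> rcases hePQ with heP | heQ
  · exact clopen_contra hG hQcl hQdef hv hdisj hcl hcP heP hKv
  · exact hnc c (cutpoint_of_split hG hcG hc hcl hw hu hPcl hQcl hPdef hPQ hdisj hcP heQ)
  · exact hnc e (cutpoint_of_split hG heG he (by rw [Set.pair_comm e c]; exact hcl) hw hu hPcl
      hQcl hPdef hPQ hdisj heP hcQ)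
  · exact clopen_contra hG hPcl hPdef hu (by rw [Set.inter_comm]; exact hdisj) hcl hcQ heQ hKu

end Aux
section Aux2

set_option linter.unusedSectionVars false

variable {X : Type*} [MetricSpace X]

lemma mem_closure_inter {a : X} {s t : Set X} (ha : a ∈ closure s) (ht : IsOpen t)
    (hat : a ∈ t) : a ∈ closure (s ∩ t) := by
  rw [mem_closure_iff] at ha ⊢
  intro o ho hao
  obtain ⟨z, hz1, hz2⟩ := ha (o ∩ t) (ho.inter ht) ⟨hao, hat⟩
  exact ⟨z, hz1.1, hz2, hz1.2⟩

lemma not_preconnected_pair {x y : X} (h : x ≠ y) : ¬IsPreconnected ({x, y} : Set X) := by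
  intro hpc
  obtain ⟨z, hz1, hz2, hz3⟩ := hpc {y}ᶜ {x}ᶜ isClosed_singleton.isOpen_compl
    isClosed_singleton.isOpen_compl
    (fun z hz => by
      rcases hz with rfl | rfl
      · exact Or.inl (by simpa using h)
      · exact Or.inr (by simpa using h.symm))
    ⟨x, Or.inl rfl, by simpa using h⟩ ⟨y, Or.inr rfl, by simpa using h.symm⟩
  rcases hz1 with rfl | rfl
  · exact hz3 rfl
  · exact hz2 rfl

variable [CompactSpace X] [ConnectedSpace X]

lemma mem_closure_of_sepPair {c d : X} {U V : Set X}
    (hnc : ∀ p : X, ¬CutPoint p) (hcd : c ≠ d) (h : SepPair ({c, d} : Set X) U V) :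
    c ∈ closure U := by
  by_contra hc
  have hCcl : IsClosed ({c, d} : Set X) := pair_isClosed c d
  have hU : IsOpen U := relOpen_isOpen hCcl h.1
  have hclU : closure U ⊆ U ∪ {c, d} := closure_subset_of_sepPair hCcl h
  have hcU : c ∉ U := fun hc' => (sepPair_subset_compl h hc') (Or.inl rfl)
  have hdU : d ∉ U := fun hd' => (sepPair_subset_compl h hd') (Or.inr rfl)
  have hcV : c ∉ V := fun hc' => (sepPair_subset_compl (sepPair_symm h) hc') (Or.inl rfl)
  apply hnc d
  refine ⟨U, V ∪ {c}, ⟨U, hU, ?_⟩, ⟨(closure U)ᶜ, isClosed_closure.isOpen_compl, ?_⟩, ?_, ?_,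
    h.2.2.2.2.1, ⟨c, Or.inr rfl⟩⟩
  · ext z
    simp only [Set.mem_inter_iff, Set.mem_compl_iff, Set.mem_singleton_iff, iff_self_and]
    intro hz
    rintro rfl
    exact hdU hz
  · ext z
    simp only [Set.mem_union, Set.mem_inter_iff, Set.mem_compl_iff, Set.mem_singleton_iff]
    constructor
    · rintro (hzV | rfl)
      · refine ⟨fun hzc => ?_, fun hzd => ?_⟩
        · rcases hclU hzc with h1 | h1
          · exact Set.disjoint_left.mp h.2.2.1 h1 hzV
          · rcases h1 with rfl | rfl
            · exact hcV hzV
            · exact (sepPair_subset_compl (sepPair_symm h) hzV) (Or.inr rfl)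
        · subst hzd
          exact (sepPair_subset_compl (sepPair_symm h) hzV) (Or.inr rfl)
      · exact ⟨hc, hcd⟩
    · rintro ⟨hzc, hzd⟩
      by_cases hzU : z ∈ U
      · exact absurd (subset_closure hzU) hzc
      · by_cases hzcc : z = c
        · exact Or.inr hzcc
        · left
          have : z ∈ U ∪ V := by
            rw [h.2.2.2.1]
            simp only [Set.mem_compl_iff, Set.mem_insert_iff, Set.mem_singleton_iff]
            push_neg
            exact ⟨hzcc, hzd⟩
          exact this.resolve_left hzU
  · rw [Set.disjoint_union_right]
    exact ⟨h.2.2.1, Set.disjoint_left.mpr fun z hz hz2 => hcU (hz2 ▸ hz)⟩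
  · ext z
    have hz := Set.ext_iff.mp h.2.2.2.1 z
    simp only [Set.mem_union, Set.mem_compl_iff, Set.mem_insert_iff,
      Set.mem_singleton_iff] at hz ⊢
    constructor
    · rintro (hzU | hzV | rfl)
      · exact fun hzd => hdU (hzd ▸ hzU)
      · exact fun hzd => (sepPair_subset_compl (sepPair_symm h) (hzd ▸ hzV)) (Or.inr rfl)
      · exact hcd
    · intro hzd
      by_cases hzc : z = c
      · exact Or.inr (Or.inr hzc)
      · rcases hz.mpr (by push_neg; exact ⟨hzc, hzd⟩) with h1 | h1
        · exact Or.inl h1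
        · exact Or.inr (Or.inl h1)

lemma mem_closure_of_sepPair' {c d : X} {U V : Set X}
    (hnc : ∀ p : X, ¬CutPoint p) (hcd : c ≠ d) (h : SepPair ({c, d} : Set X) U V) :
    d ∈ closure U :=
  mem_closure_of_sepPair hnc hcd.symm (by rwa [Set.pair_comm d c])

lemma continuum_meets {E U V C : Set X} (hEpc : IsPreconnected E)
    (hC : IsClosed C) (h : SepPair C U V) {a b : X} (ha : a ∈ E) (haU : a ∈ U)
    (hb : b ∈ E) (hbV : b ∈ V) : (C ∩ E).Nonempty := by
  by_contra hne
  rw [Set.not_nonempty_iff_eq_empty, Set.eq_empty_iff_forall_notMem] at hne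
  have hEs : E ⊆ U ∪ V := by
    intro z hz
    rw [h.2.2.2.1]
    exact fun hzC => hne z ⟨hzC, hz⟩
  obtain ⟨z, _, hzU, hzV⟩ := hEpc U V (relOpen_isOpen hC h.1) (relOpen_isOpen hC h.2.1)
    hEs ⟨a, ha, haU⟩ ⟨b, hb, hbV⟩
  exact Set.disjoint_left.mp h.2.2.1 hzU hzV

end Aux2
section Aux3

set_option linter.unusedSectionVars false

lemma zmod4_cases : ∀ i : ZMod 4, i = 0 ∨ i = 1 ∨ i = 2 ∨ i = 3 := by decide

lemma zmod3_cases : ∀ i : ZMod 3, i = 0 ∨ i = 1 ∨ i = 2 := by decide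

variable {X : Type*} [MetricSpace X]

lemma CyclicDecomp.rotate {n : ℕ} {x : ZMod n → X} {M : ZMod n → Set X}
    (h : CyclicDecomp n x M) (k : ZMod n) :
    CyclicDecomp n (fun i => x (i + k)) (fun i => M (i + k)) := by
  obtain ⟨hn, hinj, hsub, hadj, hdisj, huniv⟩ := h
  refine ⟨hn, ?_, fun i => hsub _, ?_, ?_, ?_⟩
  · intro i j hij
    exact add_right_cancel (hinj hij)
  · intro i
    have := hadj (i + k)
    rwa [add_right_comm] at this
  · intro i j h1 h2 h3
    refine hdisj (i + k) (j + k) (fun hc => h1 (add_right_cancel hc)) (fun hc => h2 ?_)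
      (fun hc => h3 ?_)
    · have : j + k = (i + 1) + k := by rw [hc]; ring
      exact add_right_cancel this
    · have : i + k = (j + 1) + k := by rw [hc]; ring
      exact add_right_cancel this
  · rw [Set.eq_univ_iff_forall]
    intro z
    obtain ⟨i, hi⟩ := Set.mem_iUnion.mp (Set.eq_univ_iff_forall.mp huniv z)
    exact Set.mem_iUnion.mpr ⟨i - k, by simpa using hi⟩

variable [CompactSpace X] [ConnectedSpace X]

lemma adj_cutPair {x : ZMod 4 → X} {M : ZMod 4 → Set X}
    (hnc : ∀ p : X, ¬CutPoint p) (h : CyclicDecomp 4 x M) : CutPair (x 0) (x 1) := by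
  obtain ⟨-, hinj, hsub, hadj, hdisj, huniv⟩ := h
  have h01 : M 0 ∩ M 1 = {x 1} := by
    simpa only [show (0 : ZMod 4) + 1 = 1 from by decide] using hadj 0
  have h12 : M 1 ∩ M 2 = {x 2} := by
    simpa only [show (1 : ZMod 4) + 1 = 2 from by decide] using hadj 1
  have h30 : M 3 ∩ M 0 = {x 0} := by
    simpa only [show (3 : ZMod 4) + 1 = 0 from by decide] using hadj 3
  have h02 : M 0 ∩ M 2 = ∅ := hdisj 0 2 (by decide) (by decide) (by decide)
  have hx1 : x 1 ∈ M 0 ∩ M 1 := by rw [h01]; exact rfl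
  have hx2 : x 2 ∈ M 1 ∩ M 2 := by rw [h12]; exact rfl
  have hx0 : x 0 ∈ M 3 ∩ M 0 := by rw [h30]; exact rfl
  have hne01 : x 0 ≠ x 1 := fun heq => absurd (hinj heq) (by decide)
  have hne12 : x 1 ≠ x 2 := fun heq => absurd (hinj heq) (by decide)
  have hkey : M 0 \ {x 0, x 1} = (M 1 ∪ M 2 ∪ M 3)ᶜ := by
    ext z
    simp only [Set.mem_diff, Set.mem_insert_iff, Set.mem_singleton_iff, Set.mem_compl_iff,
      Set.mem_union]
    constructor
    · rintro ⟨hz0, hz⟩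
      push_neg at hz
      rintro ((hz1 | hz2) | hz3)
      · have : z ∈ M 0 ∩ M 1 := ⟨hz0, hz1⟩
        rw [h01] at this
        exact hz.2 this
      · have : z ∈ M 0 ∩ M 2 := ⟨hz0, hz2⟩
        rw [h02] at this
        exact this
      · have : z ∈ M 3 ∩ M 0 := ⟨hz3, hz0⟩
        rw [h30] at this
        exact hz.1 this
    · intro hz
      have hz0 : z ∈ M 0 := by
        obtain ⟨i, hi⟩ := Set.mem_iUnion.mp (Set.eq_univ_iff_forall.mp huniv z)
        rcases zmod4_cases i with rfl | rfl | rfl | rfl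
        · exact hi
        · exact absurd hi (fun hh => hz (Or.inl (Or.inl hh)))
        · exact absurd hi (fun hh => hz (Or.inl (Or.inr hh)))
        · exact absurd hi (fun hh => hz (Or.inr hh))
      refine ⟨hz0, ?_⟩
      rintro (rfl | rfl)
      · exact hz (Or.inr hx0.1)
      · exact hz (Or.inl (Or.inl hx1.2))
  have hM0cl : IsClosed (M 0) := (hsub 0).1.isClosed
  have hUopen : IsOpen (M 0 \ {x 0, x 1}) := by
    rw [hkey]
    exact (((hsub 1).1.isClosed.union (hsub 2).1.isClosed).union
      (hsub 3).1.isClosed).isOpen_compl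
  have hUne : (M 0 \ {x 0, x 1}).Nonempty := by
    rw [Set.diff_nonempty]
    intro hsubp
    have heq : M 0 = {x 0, x 1} :=
      Set.Subset.antisymm hsubp (by rintro z (rfl | rfl); exacts [hx0.2, hx1.1])
    exact not_preconnected_pair hne01 (heq ▸ (hsub 0).2.2)
  have hx2M0 : x 2 ∉ M 0 := fun hc => by
    have : x 2 ∈ M 0 ∩ M 2 := ⟨hc, hx2.2⟩
    rw [h02] at this
    exact this
  refine ⟨hne01, hnc _, hnc _, M 0 \ {x 0, x 1}, (M 0)ᶜ,
    ⟨M 0 \ {x 0, x 1}, hUopen, ?_⟩, ⟨(M 0)ᶜ, hM0cl.isOpen_compl, ?_⟩, ?_, ?_, hUne,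
    ⟨x 2, hx2M0⟩⟩
  · ext z
    simp only [Set.mem_diff, Set.mem_inter_iff, Set.mem_compl_iff]
    tauto
  · ext z
    simp only [Set.mem_inter_iff, Set.mem_compl_iff, iff_self_and]
    intro hz
    rintro (rfl | rfl)
    · exact hz hx0.2
    · exact hz hx1.1
  · exact Set.disjoint_left.mpr fun z hz hz2 => hz2 hz.1
  · ext z
    simp only [Set.mem_union, Set.mem_diff, Set.mem_compl_iff, Set.mem_insert_iff,
      Set.mem_singleton_iff]
    constructor
    · rintro (⟨hz0, hz⟩ | hz)
      · exact hz
      · rintro (rfl | rfl)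
        · exact hz hx0.2
        · exact hz hx1.1
    · intro hz
      by_cases hz0 : z ∈ M 0
      · exact Or.inl ⟨hz0, hz⟩
      · exact Or.inr hz0

lemma opp_cutPair {x : ZMod 4 → X} {M : ZMod 4 → Set X}
    (hnc : ∀ p : X, ¬CutPoint p) (h : CyclicDecomp 4 x M) : CutPair (x 0) (x 2) := by
  obtain ⟨-, hinj, hsub, hadj, hdisj, huniv⟩ := h
  have h01 : M 0 ∩ M 1 = {x 1} := by
    simpa only [show (0 : ZMod 4) + 1 = 1 from by decide] using hadj 0
  have h12 : M 1 ∩ M 2 = {x 2} := by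
    simpa only [show (1 : ZMod 4) + 1 = 2 from by decide] using hadj 1
  have h23 : M 2 ∩ M 3 = {x 3} := by
    simpa only [show (2 : ZMod 4) + 1 = 3 from by decide] using hadj 2
  have h30 : M 3 ∩ M 0 = {x 0} := by
    simpa only [show (3 : ZMod 4) + 1 = 0 from by decide] using hadj 3
  have h02 : M 0 ∩ M 2 = ∅ := hdisj 0 2 (by decide) (by decide) (by decide)
  have h13 : M 1 ∩ M 3 = ∅ := hdisj 1 3 (by decide) (by decide) (by decide)
  have hx1 : x 1 ∈ M 0 ∩ M 1 := by rw [h01]; exact rfl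
  have hx2 : x 2 ∈ M 1 ∩ M 2 := by rw [h12]; exact rfl
  have hx3 : x 3 ∈ M 2 ∩ M 3 := by rw [h23]; exact rfl
  have hx0 : x 0 ∈ M 3 ∩ M 0 := by rw [h30]; exact rfl
  have hne02 : x 0 ≠ x 2 := fun heq => absurd (hinj heq) (by decide)
  have hmem : ∀ z : X, z ∈ M 0 ∨ z ∈ M 1 ∨ z ∈ M 2 ∨ z ∈ M 3 := by
    intro z
    obtain ⟨i, hi⟩ := Set.mem_iUnion.mp (Set.eq_univ_iff_forall.mp huniv z)
    rcases zmod4_cases i with rfl | rfl | rfl | rfl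
    exacts [Or.inl hi, Or.inr (Or.inl hi), Or.inr (Or.inr (Or.inl hi)),
      Or.inr (Or.inr (Or.inr hi))]
  have hx1U : x 1 ∉ M 2 ∪ M 3 := by
    rintro (hc | hc)
    · have : x 1 ∈ M 1 ∩ M 2 := ⟨hx1.2, hc⟩
      rw [h12] at this
      exact absurd (hinj this) (by decide)
    · have : x 1 ∈ M 1 ∩ M 3 := ⟨hx1.2, hc⟩
      rw [h13] at this
      exact this
  have hx3V : x 3 ∉ M 0 ∪ M 1 := by
    rintro (hc | hc)
    · have : x 3 ∈ M 3 ∩ M 0 := ⟨hx3.2, hc⟩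
      rw [h30] at this
      exact absurd (hinj this) (by decide)
    · have : x 3 ∈ M 1 ∩ M 3 := ⟨hc, hx3.2⟩
      rw [h13] at this
      exact this
  refine ⟨hne02, hnc _, hnc _, (M 2 ∪ M 3)ᶜ, (M 0 ∪ M 1)ᶜ,
    ⟨(M 2 ∪ M 3)ᶜ, ((hsub 2).1.isClosed.union (hsub 3).1.isClosed).isOpen_compl, ?_⟩,
    ⟨(M 0 ∪ M 1)ᶜ, ((hsub 0).1.isClosed.union (hsub 1).1.isClosed).isOpen_compl, ?_⟩,
    ?_, ?_, ⟨x 1, hx1U⟩, ⟨x 3, hx3V⟩⟩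
  · ext z
    simp only [Set.mem_inter_iff, Set.mem_compl_iff, Set.mem_union, Set.mem_insert_iff,
      Set.mem_singleton_iff, iff_self_and]
    intro hz
    push_neg
    constructor
    · rintro rfl; exact hz (Or.inr hx0.1)
    · rintro rfl; exact hz (Or.inl hx2.2)
  · ext z
    simp only [Set.mem_inter_iff, Set.mem_compl_iff, Set.mem_union, Set.mem_insert_iff,
      Set.mem_singleton_iff, iff_self_and]
    intro hz
    push_neg
    constructor
    · rintro rfl; exact hz (Or.inl hx0.2)
    · rintro rfl; exact hz (Or.inr hx2.1)
  · refine Set.disjoint_left.mpr fun z hz hz2 => ?_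
    simp only [Set.mem_compl_iff, Set.mem_union] at hz hz2
    rcases hmem z with hc | hc | hc | hc
    · exact hz2 (Or.inl hc)
    · exact hz2 (Or.inr hc)
    · exact hz (Or.inl hc)
    · exact hz (Or.inr hc)
  · ext z
    simp only [Set.mem_union, Set.mem_compl_iff, Set.mem_insert_iff, Set.mem_singleton_iff]
    constructor
    · rintro (hz | hz)
      · push_neg
        constructor
        · rintro rfl; exact hz (Or.inr hx0.1)
        · rintro rfl; exact hz (Or.inl hx2.2)
      · push_neg
        constructor
        · rintro rfl; exact hz (Or.inl hx0.2)
        · rintro rfl; exact hz (Or.inr hx2.1)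
    · intro hz
      push_neg at hz
      by_cases hz23 : z ∈ M 2 ∪ M 3
      · right
        rintro (hc | hc)
        · rcases hz23 with hc2 | hc2
          · have : z ∈ M 0 ∩ M 2 := ⟨hc, hc2⟩
            rw [h02] at this
            exact this
          · have : z ∈ M 3 ∩ M 0 := ⟨hc2, hc⟩
            rw [h30] at this
            exact hz.1 this
        · rcases hz23 with hc2 | hc2
          · have : z ∈ M 1 ∩ M 2 := ⟨hc, hc2⟩
            rw [h12] at this
            exact hz.2 this
          · have : z ∈ M 1 ∩ M 3 := ⟨hc, hc2⟩
            rw [h13] at this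
            exact this
      · exact Or.inl hz23

lemma triple_cyclicFinset {x : ZMod 4 → X} {M : ZMod 4 → Set X}
    (h : CyclicDecomp 4 x M) : CyclicFinset ({x 0, x 1, x 2} : Set X) := by
  obtain ⟨-, hinj, hsub, hadj, hdisj, huniv⟩ := h
  have h01 : M 0 ∩ M 1 = {x 1} := by
    simpa only [show (0 : ZMod 4) + 1 = 1 from by decide] using hadj 0
  have h12 : M 1 ∩ M 2 = {x 2} := by
    simpa only [show (1 : ZMod 4) + 1 = 2 from by decide] using hadj 1
  have h23 : M 2 ∩ M 3 = {x 3} := by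
    simpa only [show (2 : ZMod 4) + 1 = 3 from by decide] using hadj 2
  have h30 : M 3 ∩ M 0 = {x 0} := by
    simpa only [show (3 : ZMod 4) + 1 = 0 from by decide] using hadj 3
  have h02 : M 0 ∩ M 2 = ∅ := hdisj 0 2 (by decide) (by decide) (by decide)
  have h13 : M 1 ∩ M 3 = ∅ := hdisj 1 3 (by decide) (by decide) (by decide)
  have hx3 : x 3 ∈ M 2 ∩ M 3 := by rw [h23]; exact rfl
  right
  refine ⟨3, ![x 0, x 1, x 2], ![M 0, M 1, M 2 ∪ M 3], ⟨by norm_num, ?_, ?_, ?_, ?_, ?_⟩, ?_⟩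
  · intro i j hij
    rcases zmod3_cases i with rfl | rfl | rfl <;> rcases zmod3_cases j with rfl | rfl | rfl <;>
      first
        | rfl
        | (exact absurd (hinj hij) (by decide))
  · intro i
    rcases zmod3_cases i with rfl | rfl | rfl
    · exact hsub 0
    · exact hsub 1
    · exact ⟨(hsub 2).1.union (hsub 3).1,
        IsConnected.union ⟨x 3, hx3.1, hx3.2⟩ (hsub 2).2 (hsub 3).2⟩
  · intro i
    rcases zmod3_cases i with rfl | rfl | rfl
    · show M 0 ∩ M 1 = {x 1}
      exact h01
    · show M 1 ∩ (M 2 ∪ M 3) = {x 2}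
      rw [Set.inter_union_distrib_left, h12, h13, Set.union_empty]
    · show (M 2 ∪ M 3) ∩ M 0 = {x 0}
      rw [Set.union_inter_distrib_right, Set.inter_comm (M 2) (M 0), h02, h30,
        Set.empty_union]
  · intro i j h1 h2 h3
    exact ((by decide : ∀ i j : ZMod 3, i ≠ j → j ≠ i + 1 → i ≠ j + 1 → False) i j h1 h2 h3).elim
  · rw [Set.eq_univ_iff_forall]
    intro z
    obtain ⟨i, hi⟩ := Set.mem_iUnion.mp (Set.eq_univ_iff_forall.mp huniv z)
    rcases zmod4_cases i with rfl | rfl | rfl | rfl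
    · exact Set.mem_iUnion.mpr ⟨0, hi⟩
    · exact Set.mem_iUnion.mpr ⟨1, hi⟩
    · exact Set.mem_iUnion.mpr ⟨2, Or.inl hi⟩
    · exact Set.mem_iUnion.mpr ⟨2, Or.inr hi⟩
  · ext z
    simp only [Set.mem_insert_iff, Set.mem_singleton_iff, Set.mem_range]
    constructor
    · rintro (rfl | rfl | rfl)
      exacts [⟨0, rfl⟩, ⟨1, rfl⟩, ⟨2, rfl⟩]
    · rintro ⟨i, rfl⟩
      rcases zmod3_cases i with rfl | rfl | rfl
      exacts [Or.inl rfl, Or.inr (Or.inl rfl), Or.inr (Or.inr rfl)]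

end Aux3
section Aux4

set_option linter.unusedSectionVars false

variable {X : Type*} [MetricSpace X] [CompactSpace X] [ConnectedSpace X]

lemma cyclicSet_range {x : ZMod 4 → X} {M : ZMod 4 → Set X}
    (hnc : ∀ p : X, ¬CutPoint p) (h : CyclicDecomp 4 x M) :
    CyclicSet (Set.range x) := by
  classical
  have hinj := h.2.1
  have cp : ∀ k : ZMod 4, CutPair (x (0 + k)) (x (1 + k)) := fun k =>
    adj_cutPair hnc (h.rotate k)
  have cpo : ∀ k : ZMod 4, CutPair (x (0 + k)) (x (2 + k)) := fun k =>
    opp_cutPair hnc (h.rotate k)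
  have tr : ∀ k : ZMod 4, CyclicFinset ({x (0 + k), x (1 + k), x (2 + k)} : Set X) := fun k =>
    triple_cyclicFinset (h.rotate k)
  have cp01 : CutPair (x 0) (x 1) := by
    simpa only [show (0 : ZMod 4) + 0 = 0 from by decide,
      show (1 : ZMod 4) + 0 = 1 from by decide] using cp 0
  have cp12 : CutPair (x 1) (x 2) := by
    simpa only [show (0 : ZMod 4) + 1 = 1 from by decide,
      show (1 : ZMod 4) + 1 = 2 from by decide] using cp 1
  have cp23 : CutPair (x 2) (x 3) := by
    simpa only [show (0 : ZMod 4) + 2 = 2 from by decide,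
      show (1 : ZMod 4) + 2 = 3 from by decide] using cp 2
  have cp30 : CutPair (x 3) (x 0) := by
    simpa only [show (0 : ZMod 4) + 3 = 3 from by decide,
      show (1 : ZMod 4) + 3 = 0 from by decide] using cp 3
  have cp02 : CutPair (x 0) (x 2) := by
    simpa only [show (0 : ZMod 4) + 0 = 0 from by decide,
      show (2 : ZMod 4) + 0 = 2 from by decide] using cpo 0
  have cp13 : CutPair (x 1) (x 3) := by
    simpa only [show (0 : ZMod 4) + 1 = 1 from by decide,
      show (2 : ZMod 4) + 1 = 3 from by decide] using cpo 1
  have tr012 : CyclicFinset ({x 0, x 1, x 2} : Set X) := by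
    simpa only [show (0 : ZMod 4) + 0 = 0 from by decide,
      show (1 : ZMod 4) + 0 = 1 from by decide,
      show (2 : ZMod 4) + 0 = 2 from by decide] using tr 0
  have tr123 : CyclicFinset ({x 1, x 2, x 3} : Set X) := by
    simpa only [show (0 : ZMod 4) + 1 = 1 from by decide,
      show (1 : ZMod 4) + 1 = 2 from by decide,
      show (2 : ZMod 4) + 1 = 3 from by decide] using tr 1
  have tr230 : CyclicFinset ({x 2, x 3, x 0} : Set X) := by
    simpa only [show (0 : ZMod 4) + 2 = 2 from by decide,
      show (1 : ZMod 4) + 2 = 3 from by decide,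
      show (2 : ZMod 4) + 2 = 0 from by decide] using tr 2
  have tr301 : CyclicFinset ({x 3, x 0, x 1} : Set X) := by
    simpa only [show (0 : ZMod 4) + 3 = 3 from by decide,
      show (1 : ZMod 4) + 3 = 0 from by decide,
      show (2 : ZMod 4) + 3 = 1 from by decide] using tr 3
  have hrange : Set.range x = {x 0, x 1, x 2, x 3} := by
    ext z
    simp only [Set.mem_range, Set.mem_insert_iff, Set.mem_singleton_iff]
    constructor
    · rintro ⟨i, rfl⟩
      rcases zmod4_cases i with rfl | rfl | rfl | rfl
      exacts [Or.inl rfl, Or.inr (Or.inl rfl), Or.inr (Or.inr (Or.inl rfl)),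
        Or.inr (Or.inr (Or.inr rfl))]
    · rintro (rfl | rfl | rfl | rfl)
      exacts [⟨0, rfl⟩, ⟨1, rfl⟩, ⟨2, rfl⟩, ⟨3, rfl⟩]
  have qd : CyclicFinset ({x 0, x 1, x 2, x 3} : Set X) := by
    rw [← hrange]
    exact Or.inr ⟨4, x, M, h, rfl⟩
  intro A hA hcard
  have hmem : ∀ z ∈ (A : Set X), z = x 0 ∨ z = x 1 ∨ z = x 2 ∨ z = x 3 := by
    intro z hz
    have := hA hz
    rw [hrange] at this
    simpa using this
  by_cases h0 : x 0 ∈ (A : Set X) <;> by_cases h1 : x 1 ∈ (A : Set X) <;>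
    by_cases h2 : x 2 ∈ (A : Set X) <;> by_cases h3 : x 3 ∈ (A : Set X)
  -- 1111
  · have hAe : (A : Set X) = {x 0, x 1, x 2, x 3} := by
      apply Set.Subset.antisymm
      · intro z hz
        rcases hmem z hz with rfl | rfl | rfl | rfl
        exacts [Or.inl rfl, Or.inr (Or.inl rfl), Or.inr (Or.inr (Or.inl rfl)),
          Or.inr (Or.inr (Or.inr rfl))]
      · intro z hz
        simp only [Set.mem_insert_iff, Set.mem_singleton_iff] at hz
        rcases hz with rfl | rfl | rfl | rfl <;> assumption
    rw [hAe]; exact qd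
  -- 1110
  · have hAe : (A : Set X) = {x 0, x 1, x 2} := by
      apply Set.Subset.antisymm
      · intro z hz
        rcases hmem z hz with rfl | rfl | rfl | rfl
        exacts [Or.inl rfl, Or.inr (Or.inl rfl), Or.inr (Or.inr rfl), absurd hz h3]
      · intro z hz
        simp only [Set.mem_insert_iff, Set.mem_singleton_iff] at hz
        rcases hz with rfl | rfl | rfl <;> assumption
    rw [hAe]; exact tr012
  -- 1101
  · have hAe : (A : Set X) = {x 3, x 0, x 1} := by
      apply Set.Subset.antisymm
      · intro z hz
        rcases hmem z hz with rfl | rfl | rfl | rfl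
        exacts [Or.inr (Or.inl rfl), Or.inr (Or.inr rfl), absurd hz h2, Or.inl rfl]
      · intro z hz
        simp only [Set.mem_insert_iff, Set.mem_singleton_iff] at hz
        rcases hz with rfl | rfl | rfl <;> assumption
    rw [hAe]; exact tr301
  -- 1100
  · have hAe : (A : Set X) = {x 0, x 1} := by
      apply Set.Subset.antisymm
      · intro z hz
        rcases hmem z hz with rfl | rfl | rfl | rfl
        exacts [Or.inl rfl, Or.inr rfl, absurd hz h2, absurd hz h3]
      · intro z hz
        simp only [Set.mem_insert_iff, Set.mem_singleton_iff] at hz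
        rcases hz with rfl | rfl <;> assumption
    rw [hAe]; exact Or.inl ⟨x 0, x 1, cp01, rfl⟩
  -- 1011
  · have hAe : (A : Set X) = {x 2, x 3, x 0} := by
      apply Set.Subset.antisymm
      · intro z hz
        rcases hmem z hz with rfl | rfl | rfl | rfl
        exacts [Or.inr (Or.inr rfl), absurd hz h1, Or.inl rfl, Or.inr (Or.inl rfl)]
      · intro z hz
        simp only [Set.mem_insert_iff, Set.mem_singleton_iff] at hz
        rcases hz with rfl | rfl | rfl <;> assumption
    rw [hAe]; exact tr230
  -- 1010
  · have hAe : (A : Set X) = {x 0, x 2} := by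
      apply Set.Subset.antisymm
      · intro z hz
        rcases hmem z hz with rfl | rfl | rfl | rfl
        exacts [Or.inl rfl, absurd hz h1, Or.inr rfl, absurd hz h3]
      · intro z hz
        simp only [Set.mem_insert_iff, Set.mem_singleton_iff] at hz
        rcases hz with rfl | rfl <;> assumption
    rw [hAe]; exact Or.inl ⟨x 0, x 2, cp02, rfl⟩
  -- 1001
  · have hAe : (A : Set X) = {x 3, x 0} := by
      apply Set.Subset.antisymm
      · intro z hz
        rcases hmem z hz with rfl | rfl | rfl | rfl
        exacts [Or.inr rfl, absurd hz h1, absurd hz h2, Or.inl rfl]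
      · intro z hz
        simp only [Set.mem_insert_iff, Set.mem_singleton_iff] at hz
        rcases hz with rfl | rfl <;> assumption
    rw [hAe]; exact Or.inl ⟨x 3, x 0, cp30, rfl⟩
  -- 1000
  · exfalso
    refine absurd hcard (not_lt.mpr (Finset.card_le_one.mpr ?_))
    intro a ha b hb
    have ha' := hmem a (Finset.mem_coe.mpr ha)
    have hb' := hmem b (Finset.mem_coe.mpr hb)
    rcases ha' with rfl | rfl | rfl | rfl <;> rcases hb' with rfl | rfl | rfl | rfl <;>
      first
        | rfl
        | (exact absurd (Finset.mem_coe.mpr ha) (by assumption))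
        | (exact absurd (Finset.mem_coe.mpr hb) (by assumption))
  -- 0111
  · have hAe : (A : Set X) = {x 1, x 2, x 3} := by
      apply Set.Subset.antisymm
      · intro z hz
        rcases hmem z hz with rfl | rfl | rfl | rfl
        exacts [absurd hz h0, Or.inl rfl, Or.inr (Or.inl rfl), Or.inr (Or.inr rfl)]
      · intro z hz
        simp only [Set.mem_insert_iff, Set.mem_singleton_iff] at hz
        rcases hz with rfl | rfl | rfl <;> assumption
    rw [hAe]; exact tr123
  -- 0110
  · have hAe : (A : Set X) = {x 1, x 2} := by
      apply Set.Subset.antisymm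
      · intro z hz
        rcases hmem z hz with rfl | rfl | rfl | rfl
        exacts [absurd hz h0, Or.inl rfl, Or.inr rfl, absurd hz h3]
      · intro z hz
        simp only [Set.mem_insert_iff, Set.mem_singleton_iff] at hz
        rcases hz with rfl | rfl <;> assumption
    rw [hAe]; exact Or.inl ⟨x 1, x 2, cp12, rfl⟩
  -- 0101
  · have hAe : (A : Set X) = {x 1, x 3} := by
      apply Set.Subset.antisymm
      · intro z hz
        rcases hmem z hz with rfl | rfl | rfl | rfl
        exacts [absurd hz h0, Or.inl rfl, absurd hz h2, Or.inr rfl]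
      · intro z hz
        simp only [Set.mem_insert_iff, Set.mem_singleton_iff] at hz
        rcases hz with rfl | rfl <;> assumption
    rw [hAe]; exact Or.inl ⟨x 1, x 3, cp13, rfl⟩
  -- 0100
  · exfalso
    refine absurd hcard (not_lt.mpr (Finset.card_le_one.mpr ?_))
    intro a ha b hb
    have ha' := hmem a (Finset.mem_coe.mpr ha)
    have hb' := hmem b (Finset.mem_coe.mpr hb)
    rcases ha' with rfl | rfl | rfl | rfl <;> rcases hb' with rfl | rfl | rfl | rfl <;>
      first
        | rfl
        | (exact absurd (Finset.mem_coe.mpr ha) (by assumption))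
        | (exact absurd (Finset.mem_coe.mpr hb) (by assumption))
  -- 0011
  · have hAe : (A : Set X) = {x 2, x 3} := by
      apply Set.Subset.antisymm
      · intro z hz
        rcases hmem z hz with rfl | rfl | rfl | rfl
        exacts [absurd hz h0, absurd hz h1, Or.inl rfl, Or.inr rfl]
      · intro z hz
        simp only [Set.mem_insert_iff, Set.mem_singleton_iff] at hz
        rcases hz with rfl | rfl <;> assumption
    rw [hAe]; exact Or.inl ⟨x 2, x 3, cp23, rfl⟩
  -- 0010
  · exfalso
    refine absurd hcard (not_lt.mpr (Finset.card_le_one.mpr ?_))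
    intro a ha b hb
    have ha' := hmem a (Finset.mem_coe.mpr ha)
    have hb' := hmem b (Finset.mem_coe.mpr hb)
    rcases ha' with rfl | rfl | rfl | rfl <;> rcases hb' with rfl | rfl | rfl | rfl <;>
      first
        | rfl
        | (exact absurd (Finset.mem_coe.mpr ha) (by assumption))
        | (exact absurd (Finset.mem_coe.mpr hb) (by assumption))
  -- 0001
  · exfalso
    refine absurd hcard (not_lt.mpr (Finset.card_le_one.mpr ?_))
    intro a ha b hb
    have ha' := hmem a (Finset.mem_coe.mpr ha)
    have hb' := hmem b (Finset.mem_coe.mpr hb)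
    rcases ha' with rfl | rfl | rfl | rfl <;> rcases hb' with rfl | rfl | rfl | rfl <;>
      first
        | rfl
        | (exact absurd (Finset.mem_coe.mpr ha) (by assumption))
        | (exact absurd (Finset.mem_coe.mpr hb) (by assumption))
  -- 0000
  · exfalso
    refine absurd hcard (not_lt.mpr (Finset.card_le_one.mpr ?_))
    intro a ha b hb
    have ha' := hmem a (Finset.mem_coe.mpr ha)
    rcases ha' with rfl | rfl | rfl | rfl <;>
      exact absurd (Finset.mem_coe.mpr ha) (by assumption)

end Aux4
section Aux5

set_option linter.unusedSectionVars false

variable {X : Type*} [MetricSpace X] [CompactSpace X] [ConnectedSpace X]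

lemma quad_decomp {c d e f : X} {U V A B : Set X}
    (hnc : ∀ p : X, ¬CutPoint p)
    (hcd : c ≠ d) (hef : e ≠ f)
    (hUV : SepPair ({c, d} : Set X) U V) (hAB : SepPair ({e, f} : Set X) A B)
    (heU : e ∈ U) (hfV : f ∈ V) (hcA : c ∈ A) (hdB : d ∈ B) :
    CyclicDecomp 4 (![c, e, d, f] : ZMod 4 → X)
      (![closure (U ∩ A), closure (U ∩ B), closure (V ∩ B), closure (V ∩ A)] :
        ZMod 4 → Set X) := by
  have hCcd : IsClosed ({c, d} : Set X) := pair_isClosed c d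
  have hCef : IsClosed ({e, f} : Set X) := pair_isClosed e f
  have hUo : IsOpen U := relOpen_isOpen hCcd hUV.1
  have hVo : IsOpen V := relOpen_isOpen hCcd hUV.2.1
  have hAo : IsOpen A := relOpen_isOpen hCef hAB.1
  have hBo : IsOpen B := relOpen_isOpen hCef hAB.2.1
  have hcU : c ∉ U := fun h => sepPair_subset_compl hUV h (Or.inl rfl)
  have hdU : d ∉ U := fun h => sepPair_subset_compl hUV h (Or.inr rfl)
  have hcV : c ∉ V := fun h => sepPair_subset_compl (sepPair_symm hUV) h (Or.inl rfl)
  have hdV : d ∉ V := fun h => sepPair_subset_compl (sepPair_symm hUV) h (Or.inr rfl)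
  have heA : e ∉ A := fun h => sepPair_subset_compl hAB h (Or.inl rfl)
  have hfA : f ∉ A := fun h => sepPair_subset_compl hAB h (Or.inr rfl)
  have heB : e ∉ B := fun h => sepPair_subset_compl (sepPair_symm hAB) h (Or.inl rfl)
  have hfB : f ∉ B := fun h => sepPair_subset_compl (sepPair_symm hAB) h (Or.inr rfl)
  have heV : e ∉ V := fun h => Set.disjoint_left.mp hUV.2.2.1 heU h
  have hfU : f ∉ U := fun h => Set.disjoint_left.mp hUV.2.2.1 h hfV
  have hcB : c ∉ B := fun h => Set.disjoint_left.mp hAB.2.2.1 hcA h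
  have hdA : d ∉ A := fun h => Set.disjoint_left.mp hAB.2.2.1 h hdB
  have hne_ce : c ≠ e := fun hh => heA (hh ▸ hcA)
  have hne_cf : c ≠ f := fun hh => hfA (hh ▸ hcA)
  have hne_ed : e ≠ d := fun hh => hdU (hh ▸ heU)
  have hne_df : d ≠ f := fun hh => hfB (hh ▸ hdB)
  have hclU : closure U ⊆ U ∪ {c, d} := closure_subset_of_sepPair hCcd hUV
  have hclV : closure V ⊆ V ∪ {c, d} := closure_subset_of_sepPair hCcd (sepPair_symm hUV)
  have hclA : closure A ⊆ A ∪ {e, f} := closure_subset_of_sepPair hCef hAB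
  have hclB : closure B ⊆ B ∪ {e, f} := closure_subset_of_sepPair hCef (sepPair_symm hAB)
  have hcclU : c ∈ closure U := mem_closure_of_sepPair hnc hcd hUV
  have hdclU : d ∈ closure U := mem_closure_of_sepPair' hnc hcd hUV
  have hcclV : c ∈ closure V := mem_closure_of_sepPair hnc hcd (sepPair_symm hUV)
  have hdclV : d ∈ closure V := mem_closure_of_sepPair' hnc hcd (sepPair_symm hUV)
  have heclA : e ∈ closure A := mem_closure_of_sepPair hnc hef hAB
  have hfclA : f ∈ closure A := mem_closure_of_sepPair' hnc hef hAB
  have heclB : e ∈ closure B := mem_closure_of_sepPair hnc hef (sepPair_symm hAB)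
  have hfclB : f ∈ closure B := mem_closure_of_sepPair' hnc hef (sepPair_symm hAB)
  have hcM0 : c ∈ closure (U ∩ A) := mem_closure_inter hcclU hAo hcA
  have heM0 : e ∈ closure (U ∩ A) := by
    rw [Set.inter_comm]; exact mem_closure_inter heclA hUo heU
  have heM1 : e ∈ closure (U ∩ B) := by
    rw [Set.inter_comm]; exact mem_closure_inter heclB hUo heU
  have hdM1 : d ∈ closure (U ∩ B) := mem_closure_inter hdclU hBo hdB
  have hdM2 : d ∈ closure (V ∩ B) := mem_closure_inter hdclV hBo hdB
  have hfM2 : f ∈ closure (V ∩ B) := by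
    rw [Set.inter_comm]; exact mem_closure_inter hfclB hVo hfV
  have hfM3 : f ∈ closure (V ∩ A) := by
    rw [Set.inter_comm]; exact mem_closure_inter hfclA hVo hfV
  have hcM3 : c ∈ closure (V ∩ A) := mem_closure_inter hcclV hAo hcA
  have bound : ∀ (S T : Set X) (p q r s : X), closure S ⊆ S ∪ {p, q} →
      closure T ⊆ T ∪ {r, s} → q ∉ T → s ∉ S → q ≠ r → q ≠ s →
      closure (S ∩ T) ⊆ (S ∩ T) ∪ {p, r} := by
    intro S T p q r s hS hT hqT hsS hqr hqs z hz
    have hzS := hS (closure_mono Set.inter_subset_left hz)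
    have hzT := hT (closure_mono Set.inter_subset_right hz)
    rcases hzS with hzS | hzS
    · rcases hzT with hzT | hzT
      · exact Or.inl ⟨hzS, hzT⟩
      · rcases hzT with rfl | rfl
        · exact Or.inr (Or.inr rfl)
        · exact absurd hzS hsS
    · rcases hzS with rfl | rfl
      · exact Or.inr (Or.inl rfl)
      · rcases hzT with hzT | hzT
        · exact absurd hzT hqT
        · rcases hzT with h | h
          · exact absurd h hqr
          · exact absurd h hqs
  have b0 : closure (U ∩ A) ⊆ (U ∩ A) ∪ {c, e} :=
    bound U A c d e f hclU hclA hdA hfU hne_ed.symm hne_df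
  have b1 : closure (U ∩ B) ⊆ (U ∩ B) ∪ {d, e} :=
    bound U B d c e f (by rw [Set.pair_comm d c]; exact hclU) hclB hcB hfU hne_ce
      hne_cf
  have b2 : closure (V ∩ B) ⊆ (V ∩ B) ∪ {d, f} :=
    bound V B d c f e (by rw [Set.pair_comm d c]; exact hclV)
      (by rw [Set.pair_comm f e]; exact hclB) hcB heV hne_cf hne_ce
  have b3 : closure (V ∩ A) ⊆ (V ∩ A) ∪ {c, f} :=
    bound V A c d f e hclV (by rw [Set.pair_comm f e]; exact hclA) hdA heV hne_df
      hne_ed.symm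
  have con0 : IsConnected (closure (U ∩ A)) := by
    refine closure_connected_of_two_boundary hnc (hUo.inter hAo) (fun h => hcU h.1)
      (fun h => heA h.2) hcM0 heM0 b0 ⟨f, fun hc => ?_⟩
    rcases b0 hc with h | h
    · exact hfU h.1
    · rcases h with h | h
      · exact hne_cf h.symm
      · exact hef h.symm
  have con1 : IsConnected (closure (U ∩ B)) := by
    refine closure_connected_of_two_boundary hnc (hUo.inter hBo) (fun h => hdU h.1)
      (fun h => heB h.2) hdM1 heM1 b1 ⟨f, fun hc => ?_⟩
    rcases b1 hc with h | h
    · exact hfU h.1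
    · rcases h with h | h
      · exact hne_df h.symm
      · exact hef h.symm
  have con2 : IsConnected (closure (V ∩ B)) := by
    refine closure_connected_of_two_boundary hnc (hVo.inter hBo) (fun h => hdV h.1)
      (fun h => hfB h.2) hdM2 hfM2 b2 ⟨e, fun hc => ?_⟩
    rcases b2 hc with h | h
    · exact heV h.1
    · rcases h with h | h
      · exact hne_ed h
      · exact hef h
  have con3 : IsConnected (closure (V ∩ A)) := by
    refine closure_connected_of_two_boundary hnc (hVo.inter hAo) (fun h => hcV h.1)
      (fun h => hfA h.2) hcM3 hfM3 b3 ⟨e, fun hc => ?_⟩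
    rcases b3 hc with h | h
    · exact heV h.1
    · rcases h with h | h
      · exact hne_ce h.symm
      · exact hef h
  have interhelp : ∀ (A1 A2 G1 G2 : Set X) (p q r : X), A1 ⊆ G1 ∪ {p, q} →
      A2 ⊆ G2 ∪ {q, r} → G1 ∩ G2 = ∅ → p ∉ G2 → r ∉ G1 → p ≠ q → p ≠ r →
      q ∈ A1 → q ∈ A2 → A1 ∩ A2 = {q} := by
    intro A1 A2 G1 G2 p q r hb1 hb2 hGG hpG2 hrG1 hpq hpr hq1 hq2
    apply Set.Subset.antisymm
    · rintro z ⟨hz1, hz2⟩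
      rcases hb1 hz1 with hzG1 | hz1'
      · rcases hb2 hz2 with hzG2 | hz2'
        · exact absurd (Set.mem_inter hzG1 hzG2) (by rw [hGG]; exact fun h => h)
        · rcases hz2' with rfl | rfl
          · rfl
          · exact absurd hzG1 hrG1
      · rcases hz1' with rfl | rfl
        · rcases hb2 hz2 with hzG2 | hz2'
          · exact absurd hzG2 hpG2
          · rcases hz2' with h | h
            · exact absurd h hpq
            · exact absurd h hpr
        · rfl
    · intro z hz
      rw [Set.mem_singleton_iff] at hz
      subst hz
      exact ⟨hq1, hq2⟩
  have disjhelp : ∀ (A1 A2 G1 G2 : Set X) (p q r s : X), A1 ⊆ G1 ∪ {p, q} →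
      A2 ⊆ G2 ∪ {r, s} → G1 ∩ G2 = ∅ → p ∉ G2 → q ∉ G2 → r ∉ G1 → s ∉ G1 →
      p ≠ r → p ≠ s → q ≠ r → q ≠ s → A1 ∩ A2 = ∅ := by
    intro A1 A2 G1 G2 p q r s hb1 hb2 hGG hpG2 hqG2 hrG1 hsG1 hpr hps hqr hqs
    rw [Set.eq_empty_iff_forall_notMem]
    rintro z ⟨hz1, hz2⟩
    rcases hb1 hz1 with hzG1 | hz1' <;> rcases hb2 hz2 with hzG2 | hz2'
    · exact absurd (Set.mem_inter hzG1 hzG2) (by rw [hGG]; exact fun h => h)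
    · rcases hz2' with rfl | rfl
      · exact hrG1 hzG1
      · exact hsG1 hzG1
    · rcases hz1' with rfl | rfl
      · exact hpG2 hzG2
      · exact hqG2 hzG2
    · rcases hz1' with rfl | rfl <;> rcases hz2' with h | h
      · exact hpr h
      · exact hps h
      · exact hqr h
      · exact hqs h
  have hGG_AB : ∀ (S T : Set X), (S ∩ A) ∩ (T ∩ B) = ∅ := by
    intro S T
    rw [Set.eq_empty_iff_forall_notMem]
    rintro z ⟨⟨_, hzA⟩, _, hzB⟩
    exact Set.disjoint_left.mp hAB.2.2.1 hzA hzB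
  have hGG_UV : ∀ (S T : Set X), (U ∩ S) ∩ (V ∩ T) = ∅ := by
    intro S T
    rw [Set.eq_empty_iff_forall_notMem]
    rintro z ⟨⟨hzU, _⟩, hzV, _⟩
    exact Set.disjoint_left.mp hUV.2.2.1 hzU hzV
  have b1' : closure (U ∩ B) ⊆ (U ∩ B) ∪ {e, d} := by
    rw [Set.pair_comm e d]; exact b1
  have b2' : closure (V ∩ B) ⊆ (V ∩ B) ∪ {f, d} := by
    rw [Set.pair_comm f d]; exact b2
  have b3' : closure (V ∩ A) ⊆ (V ∩ A) ∪ {f, c} := by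
    rw [Set.pair_comm f c]; exact b3
  have adj01 : closure (U ∩ A) ∩ closure (U ∩ B) = {e} :=
    interhelp _ _ (U ∩ A) (U ∩ B) c e d b0 b1' (hGG_AB U U) (fun h => hcU h.1)
      (fun h => hdU h.1) hne_ce hcd heM0 heM1
  have hGG23 : (V ∩ B) ∩ (V ∩ A) = ∅ := by
    rw [Set.inter_comm (V ∩ B) (V ∩ A)]; exact hGG_AB V V
  have hGG30 : (V ∩ A) ∩ (U ∩ A) = ∅ := by
    rw [Set.inter_comm (V ∩ A) (U ∩ A)]; exact hGG_UV A A
  have adj12 : closure (U ∩ B) ∩ closure (V ∩ B) = {d} :=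
    interhelp _ _ (U ∩ B) (V ∩ B) e d f b1' b2 (hGG_UV B B) (fun h => heV h.1)
      (fun h => hfU h.1) hne_ed hef hdM1 hdM2
  have adj23 : closure (V ∩ B) ∩ closure (V ∩ A) = {f} :=
    interhelp _ _ (V ∩ B) (V ∩ A) d f c b2 b3' hGG23 (fun h => hdA h.2)
      (fun h => hcB h.2) hne_df hcd.symm hfM2 hfM3
  have adj30 : closure (V ∩ A) ∩ closure (U ∩ A) = {c} :=
    interhelp _ _ (V ∩ A) (U ∩ A) f c e b3' b0 hGG30 (fun h => hfU h.1)
      (fun h => heV h.1) hne_cf.symm hef.symm hcM3 hcM0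
  have d02 : closure (U ∩ A) ∩ closure (V ∩ B) = ∅ :=
    disjhelp _ _ (U ∩ A) (V ∩ B) c e d f b0 b2 (hGG_UV A B) (fun h => hcV h.1)
      (fun h => heV h.1) (fun h => hdU h.1) (fun h => hfU h.1) hcd hne_cf hne_ed hef
  have d13 : closure (U ∩ B) ∩ closure (V ∩ A) = ∅ :=
    disjhelp _ _ (U ∩ B) (V ∩ A) d e c f b1 b3 (hGG_UV B A) (fun h => hdV h.1)
      (fun h => heV h.1) (fun h => hcU h.1) (fun h => hfU h.1) hcd.symm hne_df hne_ce.symm hef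
  refine ⟨by norm_num, ?_, ?_, ?_, ?_, ?_⟩
  · intro i j hij
    rcases zmod4_cases i with rfl | rfl | rfl | rfl <;>
      rcases zmod4_cases j with rfl | rfl | rfl | rfl <;>
      first
        | rfl
        | (exact absurd hij (by assumption))
        | (exact absurd hij.symm (by assumption))
  · intro i
    rcases zmod4_cases i with rfl | rfl | rfl | rfl
    · exact ⟨isClosed_closure.isCompact, con0⟩
    · exact ⟨isClosed_closure.isCompact, con1⟩
    · exact ⟨isClosed_closure.isCompact, con2⟩
    · exact ⟨isClosed_closure.isCompact, con3⟩
  · intro i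
    rcases zmod4_cases i with rfl | rfl | rfl | rfl
    · show closure (U ∩ A) ∩ closure (U ∩ B) = {e}
      exact adj01
    · show closure (U ∩ B) ∩ closure (V ∩ B) = {d}
      exact adj12
    · show closure (V ∩ B) ∩ closure (V ∩ A) = {f}
      exact adj23
    · show closure (V ∩ A) ∩ closure (U ∩ A) = {c}
      exact adj30
  · intro i j h1 h2 h3
    have quad := (by decide : ∀ i j : ZMod 4, i ≠ j → j ≠ i + 1 → i ≠ j + 1 →
      (i = 0 ∧ j = 2) ∨ (i = 2 ∧ j = 0) ∨ (i = 1 ∧ j = 3) ∨ (i = 3 ∧ j = 1)) i j h1 h2 h3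
    rcases quad with ⟨rfl, rfl⟩ | ⟨rfl, rfl⟩ | ⟨rfl, rfl⟩ | ⟨rfl, rfl⟩
    · exact d02
    · show closure (V ∩ B) ∩ closure (U ∩ A) = ∅
      rw [Set.inter_comm]; exact d02
    · exact d13
    · show closure (V ∩ A) ∩ closure (U ∩ B) = ∅
      rw [Set.inter_comm]; exact d13
  · rw [Set.eq_univ_iff_forall]
    intro z
    by_cases hzc : z = c
    · exact Set.mem_iUnion.mpr ⟨0, hzc ▸ hcM0⟩
    by_cases hzd : z = d
    · exact Set.mem_iUnion.mpr ⟨1, hzd ▸ hdM1⟩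
    by_cases hze : z = e
    · exact Set.mem_iUnion.mpr ⟨0, hze ▸ heM0⟩
    by_cases hzf : z = f
    · exact Set.mem_iUnion.mpr ⟨2, hzf ▸ hfM2⟩
    have hzUV : z ∈ U ∪ V := by
      rw [hUV.2.2.2.1]
      simp only [Set.mem_compl_iff, Set.mem_insert_iff, Set.mem_singleton_iff]
      push_neg
      exact ⟨hzc, hzd⟩
    have hzAB : z ∈ A ∪ B := by
      rw [hAB.2.2.2.1]
      simp only [Set.mem_compl_iff, Set.mem_insert_iff, Set.mem_singleton_iff]
      push_neg
      exact ⟨hze, hzf⟩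
    rcases hzUV with hzU | hzV <;> rcases hzAB with hzA | hzB
    · exact Set.mem_iUnion.mpr ⟨0, subset_closure ⟨hzU, hzA⟩⟩
    · exact Set.mem_iUnion.mpr ⟨1, subset_closure ⟨hzU, hzB⟩⟩
    · exact Set.mem_iUnion.mpr ⟨3, subset_closure ⟨hzV, hzA⟩⟩
    · exact Set.mem_iUnion.mpr ⟨2, subset_closure ⟨hzV, hzB⟩⟩

end Aux5
section Aux6

set_option linter.unusedSectionVars false

variable {X : Type*} [MetricSpace X]

lemma exists_necklace_extension {S0 : Set X} (hS0 : CyclicSet S0)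
    {p q r : X} (hp : p ∈ S0) (hq : q ∈ S0) (hr : r ∈ S0)
    (hpq : p ≠ q) (hpr : p ≠ r) (hqr : q ≠ r) :
    ∃ S : Set X, Necklace S ∧ S0 ⊆ S := by
  have hub : ∀ cc ⊆ {S : Set X | CyclicSet S}, IsChain (· ⊆ ·) cc → cc.Nonempty →
      ∃ ub ∈ {S : Set X | CyclicSet S}, ∀ s ∈ cc, s ⊆ ub := by
    intro cc hccS hchain hne
    refine ⟨⋃₀ cc, ?_, fun s hs => Set.subset_sUnion_of_mem hs⟩
    intro A hA hcard
    have hdir : DirectedOn (· ⊆ ·) cc := hchain.directedOn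
    rw [Set.sUnion_eq_iUnion] at hA
    have : Nonempty cc := hne.to_subtype
    obtain ⟨⟨t, ht⟩, hsub⟩ :=
      (directedOn_iff_directed.mp hdir).exists_mem_subset_of_finset_subset_biUnion hA
    exact hccS ht A hsub hcard
  obtain ⟨m, hm1, hm2⟩ := zorn_subset_nonempty {S : Set X | CyclicSet S} hub S0 hS0
  refine ⟨m, ⟨hm2.1, ⟨p, hm1 hp, q, hm1 hq, r, hm1 hr, hpq, hpr, hqr⟩, ?_⟩, hm1⟩
  intro S' hS' hsub
  exact Set.Subset.antisymm (hm2.2 hS' hsub) hsub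

lemma exists_maxInsep_extension {A0 : Set X} (hA0 : InsepSet A0) :
    ∃ S : Set X, MaxInsep S ∧ A0 ⊆ S := by
  have hub : ∀ cc ⊆ {S : Set X | InsepSet S}, IsChain (· ⊆ ·) cc → cc.Nonempty →
      ∃ ub ∈ {S : Set X | InsepSet S}, ∀ s ∈ cc, s ⊆ ub := by
    intro cc hccS hchain hne
    refine ⟨⋃₀ cc, ⟨?_, ?_⟩, fun s hs => Set.subset_sUnion_of_mem hs⟩
    · obtain ⟨s, hs⟩ := hne
      exact (hccS hs).1.mono (Set.subset_sUnion_of_mem hs)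
    · intro c' d' hcp a ha b hb hsep
      obtain ⟨s, hscc, has⟩ := ha
      obtain ⟨t, htcc, hbt⟩ := hb
      rcases hchain.total hscc htcc with hst | hts
      · exact (hccS htcc).2 c' d' hcp a (hst has) b hbt hsep
      · exact (hccS hscc).2 c' d' hcp a has b (hts hbt) hsep
  obtain ⟨m, hm1, hm2⟩ := zorn_subset_nonempty {S : Set X | InsepSet S} hub A0 hA0
  exact ⟨m, ⟨hm2.1, fun B hB hsub => Set.Subset.antisymm (hm2.2 hB hsub) hsub⟩, hm1⟩

variable [CompactSpace X] [ConnectedSpace X]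

lemma necklace_of_sep {c d e f : X} (hnc : ∀ p : X, ¬CutPoint p)
    (hcd : CutPair c d) (hef : CutPair e f)
    (hsep : Separates ({e, f} : Set X) {c} {d}) :
    ∃ S : Set X, Necklace S ∧ c ∈ S ∧ d ∈ S := by
  obtain ⟨U, V, hUV⟩ := hcd.2.2.2
  obtain ⟨A, B, hAB, hcA', hdB'⟩ := hsep
  have hcA : c ∈ A := hcA' rfl
  have hdB : d ∈ B := hdB' rfl
  have hcd' : c ≠ d := hcd.1
  have hef' : e ≠ f := hef.1
  have hCcd : IsClosed ({c, d} : Set X) := pair_isClosed c d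
  have hCef : IsClosed ({e, f} : Set X) := pair_isClosed e f
  have hAo : IsOpen A := relOpen_isOpen hCef hAB.1
  have hBo : IsOpen B := relOpen_isOpen hCef hAB.2.1
  have hcnotef : c ∉ ({e, f} : Set X) := sepPair_subset_compl hAB hcA
  have hdnotef : d ∉ ({e, f} : Set X) := sepPair_subset_compl (sepPair_symm hAB) hdB
  have heA : e ∉ A := fun h => sepPair_subset_compl hAB h (Or.inl rfl)
  have heUV : e ∈ U ∪ V := by
    rw [hUV.2.2.2.1]
    exact fun h => h.elim (fun h1 => hcnotef (Or.inl h1.symm))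
      (fun h1 => hdnotef (Or.inl h1.symm))
  have hfUV : f ∈ U ∪ V := by
    rw [hUV.2.2.2.1]
    exact fun h => h.elim (fun h1 => hcnotef (Or.inr h1.symm))
      (fun h1 => hdnotef (Or.inr h1.symm))
  have hoppose : ∀ (W W' : Set X), SepPair ({c, d} : Set X) W W' → e ∈ W → f ∈ W → False := by
    intro W W' hWW' heW hfW
    have hW'o : IsOpen W' := relOpen_isOpen hCcd hWW'.2.1
    have hcW'o : c ∉ W' := fun h => sepPair_subset_compl (sepPair_symm hWW') h (Or.inl rfl)
    have hdW'o : d ∉ W' := fun h => sepPair_subset_compl (sepPair_symm hWW') h (Or.inr rfl)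
    have hW'cl : closure W' ⊆ W' ∪ {c, d} := closure_subset_of_sepPair hCcd (sepPair_symm hWW')
    have hcW' : c ∈ closure W' := mem_closure_of_sepPair hnc hcd' (sepPair_symm hWW')
    have hdW' : d ∈ closure W' := mem_closure_of_sepPair' hnc hcd' (sepPair_symm hWW')
    have heW' : e ∉ closure W' := fun h => by
      rcases hW'cl h with h1 | h1
      · exact Set.disjoint_left.mp hWW'.2.2.1 heW h1
      · rcases h1 with h1 | h1
        · exact hcnotef (Or.inl h1.symm)
        · exact hdnotef (Or.inl h1.symm)
    have hconn : IsConnected (closure W') := closure_connected_of_two_boundary hnc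
      hW'o hcW'o hdW'o hcW' hdW' hW'cl ⟨e, heW'⟩
    have hsub : closure W' ⊆ A ∪ B := by
      intro z hz
      rw [hAB.2.2.2.1]
      intro hzef
      rcases hzef with rfl | rfl
      · exact heW' hz
      · rcases hW'cl hz with h1 | h1
        · exact Set.disjoint_left.mp hWW'.2.2.1 hfW h1
        · rcases h1 with h1 | h1
          · exact hcnotef (Or.inr h1.symm)
          · exact hdnotef (Or.inr h1.symm)
    obtain ⟨z, _, hzA, hzB⟩ := hconn.2 A B hAo hBo hsub ⟨c, hcW', hcA⟩ ⟨d, hdW', hdB⟩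
    exact Set.disjoint_left.mp hAB.2.2.1 hzA hzB
  have main : ∀ (W W' : Set X), SepPair ({c, d} : Set X) W W' → e ∈ W → f ∈ W' →
      ∃ S : Set X, Necklace S ∧ c ∈ S ∧ d ∈ S := by
    intro W W' hWW' heW hfW'
    have hq := quad_decomp hnc hcd' hef' hWW' hAB heW hfW' hcA hdB
    have hcyc := cyclicSet_range hnc hq
    have hmc : c ∈ Set.range (![c, e, d, f] : ZMod 4 → X) := ⟨0, rfl⟩
    have hme : e ∈ Set.range (![c, e, d, f] : ZMod 4 → X) := ⟨1, rfl⟩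
    have hmd : d ∈ Set.range (![c, e, d, f] : ZMod 4 → X) := ⟨2, rfl⟩
    have hne_ce : c ≠ e := fun hh => heA (hh ▸ hcA)
    have hne_ed : e ≠ d := fun hh => (fun h => sepPair_subset_compl hWW' h (Or.inr rfl))
      (hh ▸ heW)
    obtain ⟨S, hS, hsub⟩ := exists_necklace_extension hcyc hmc hme hmd hne_ce hcd' hne_ed
    exact ⟨S, hS, hsub hmc, hsub hmd⟩
  rcases heUV with heU | heV
  · rcases hfUV with hfU | hfV
    · exact (hoppose U V hUV heU hfU).elim
    · exact main U V hUV heU hfV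
  · rcases hfUV with hfU | hfV
    · exact main V U (sepPair_symm hUV) heV hfU
    · exact (hoppose V U (sepPair_symm hUV) heV hfV).elim

end Aux6
theorem stmt13 {X : Type*} [MetricSpace X] [CompactSpace X] [ConnectedSpace X]
    (hnc : ∀ p : X, ¬CutPoint p)
    (E : Set X) (hE : IsSubcontinuum E) (hEnt : E.Nontrivial) :
    ∃ Q : Set X, InR Q ∧ (Q ∩ E).Nonempty := by
  classical
  obtain ⟨a, haE, b, hbE, hab⟩ := hEnt
  by_cases H1 : ∃ c d : X, CutPair c d ∧
      (Separates ({c, d} : Set X) {a} {b} ∨ Separates ({c, d} : Set X) {b} {a})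
  · obtain ⟨c, d, hcd, hor⟩ := H1
    have hwit : (({c, d} : Set X) ∩ E).Nonempty := by
      rcases hor with ⟨U, V, hsp, hU, hV⟩ | ⟨U, V, hsp, hU, hV⟩
      · exact continuum_meets hE.2.2 (pair_isClosed c d) hsp haE (hU rfl) hbE (hV rfl)
      · exact continuum_meets hE.2.2 (pair_isClosed c d) hsp hbE (hU rfl) haE (hV rfl)
    obtain ⟨w, hwcd, hwE⟩ := hwit
    by_cases H2 : ∃ e f : X, CutPair e f ∧
        (Separates ({e, f} : Set X) {c} {d} ∨ Separates ({e, f} : Set X) {d} {c})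
    · obtain ⟨e, f, hef, hor2⟩ := H2
      have hneck : ∃ S : Set X, Necklace S ∧ c ∈ S ∧ d ∈ S := by
        rcases hor2 with h2 | h2
        · exact necklace_of_sep hnc hcd hef h2
        · obtain ⟨S, hS, hd', hc'⟩ := necklace_of_sep hnc (cutPair_symm hcd) hef h2
          exact ⟨S, hS, hc', hd'⟩
      obtain ⟨S, hS, hcS, hdS⟩ := hneck
      refine ⟨S, Or.inl hS, w, ?_, hwE⟩
      simp only [Set.mem_insert_iff, Set.mem_singleton_iff] at hwcd
      rcases hwcd with rfl | rfl
      · exact hcS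
      · exact hdS
    · have hins : InsepSet ({c, d} : Set X) := by
        refine ⟨Set.nontrivial_pair hcd.1, ?_⟩
        intro e f hef p hp q hq hsepu
        simp only [Set.mem_insert_iff, Set.mem_singleton_iff] at hp hq
        rcases hp with rfl | rfl <;> rcases hq with rfl | rfl
        · exact not_separates_self hsepu
        · exact H2 ⟨e, f, hef, Or.inl hsepu⟩
        · exact H2 ⟨e, f, hef, Or.inr hsepu⟩
        · exact not_separates_self hsepu
      exact ⟨{c, d}, Or.inr (Or.inr ⟨c, d, ⟨hcd, hins⟩, rfl⟩), w, hwcd, hwE⟩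
  · have hins : InsepSet ({a, b} : Set X) := by
      refine ⟨Set.nontrivial_pair hab, ?_⟩
      intro c d hcd p hp q hq hsepu
      simp only [Set.mem_insert_iff, Set.mem_singleton_iff] at hp hq
      rcases hp with rfl | rfl <;> rcases hq with rfl | rfl
      · exact not_separates_self hsepu
      · exact H1 ⟨c, d, hcd, Or.inl hsepu⟩
      · exact H1 ⟨c, d, hcd, Or.inr hsepu⟩
      · exact not_separates_self hsepu
    obtain ⟨S, hS, hsub⟩ := exists_maxInsep_extension hins
    exact ⟨S, Or.inr (Or.inl hS), a, hsub (Or.inl rfl), haE⟩
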